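/- arXiv:math/0312129 — 4 statements merged into one kernel-verified Lean document; each statement's English description precedes it below -/
import Mathlib

section
/- For any commutative ring R and any compact topological space Y, the R-module F(Y;R) of cut-and-paste continuous functions Y → R is a flat R-module. -/
open Set

/-- A function `f : Y → R` is *cut-and-paste continuous* if the preimage of every
point is clopen. -/
def IsCutPaste (Y R : Type) [TopologicalSpace Y] (f : Y → R) : Prop :=
  ∀ r : R, IsClopen (f ⁻¹' {r})

lemma isCutPaste_comb {Y R : Type} [TopologicalSpace Y] {f g : Y → R}
    (hf : IsCutPaste Y R f) (hg : IsCutPaste Y R g) (h : R → R → R) :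
    IsCutPaste Y R (fun y => h (f y) (g y)) := by
  have key : ∀ s : Set R, IsOpen ((fun y => h (f y) (g y)) ⁻¹' s) := by
    intro s
    have e : (fun y => h (f y) (g y)) ⁻¹' s
        = ⋃ (p : R × R) (_ : h p.1 p.2 ∈ s), f ⁻¹' {p.1} ∩ g ⁻¹' {p.2} := by
      ext y
      simp only [Set.mem_preimage, Set.mem_iUnion, Set.mem_inter_iff, Set.mem_singleton_iff]
      constructor
      · intro hy; exact ⟨(f y, g y), hy, rfl, rfl⟩
      · rintro ⟨⟨a, b⟩, hs, ha, hb⟩; rw [ha, hb]; exact hs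
    rw [e]
    exact isOpen_iUnion fun p => isOpen_iUnion fun _ => ((hf p.1).2.inter (hg p.2).2)
  intro r
  refine ⟨?_, key {r}⟩
  rw [← isOpen_compl_iff, ← Set.preimage_compl]
  exact key {r}ᶜ

lemma isCutPaste_const {Y R : Type} [TopologicalSpace Y] (r : R) :
    IsCutPaste Y R (fun _ => r) := by
  intro s
  classical
  rw [Set.preimage_const]
  split_ifs
  exacts [isClopen_univ, isClopen_empty]

/-- The `R`-algebra of cut-and-paste continuous functions `Y → R`. -/
def cutPasteAlgebra (Y R : Type) [TopologicalSpace Y] [CommRing R] :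
    Subalgebra R (Y → R) where
  carrier := {f | IsCutPaste Y R f}
  mul_mem' := fun hf hg => isCutPaste_comb hf hg (· * ·)
  add_mem' := fun hf hg => isCutPaste_comb hf hg (· + ·)
  algebraMap_mem' := fun r => isCutPaste_const r

/-!
Every finite set of cut-and-paste functions on a compact space factors through the joint
evaluation map `Y → R^s`, which has a finite range `T`. The functions factoring through it
form a free module `R^T`, so `F(Y;R)` is a directed union of free submodules, and a relation
in it is trivial because it already is in one of them.
-/

open Function

theorem Module.Flat.of_forall_finite_subset_flat_submodule {R M : Type*} [CommRing R]
    [AddCommGroup M] [Module R M]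
    (h : ∀ s : Set M, s.Finite → ∃ N : Submodule R M, s ⊆ N ∧ Module.Flat R N) :
    Module.Flat R M := by
  refine Module.Flat.of_forall_isTrivialRelation fun {l f x} hfx => ?_
  obtain ⟨N, hxN, hN⟩ := h (range x) (finite_range x)
  let x' : Fin l → N := fun i => ⟨x i, hxN ⟨i, rfl⟩⟩
  have hfx' : ∑ i, f i • x' i = 0 := N.injective_subtype (by simpa [x'] using hfx)
  obtain ⟨k, a, y, hxy, hfa⟩ := Module.Flat.iff_forall_isTrivialRelation.mp hN hfx'
  exact ⟨k, a, fun j => y j, fun i => by simpa using congrArg N.subtype (hxy i), hfa⟩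

lemma isCutPaste_iff_isLocallyConstant {Y R : Type} [TopologicalSpace Y] {f : Y → R} :
    IsCutPaste Y R f ↔ IsLocallyConstant f :=
  ⟨fun hf => IsLocallyConstant.iff_isOpen_fiber.2 fun r => (hf r).isOpen,
    fun hf r => hf.isClopen_fiber r⟩

section Comap

variable {Y : Type} {T : Type*} [TopologicalSpace Y] (R : Type) [CommRing R] {π : Y → T}

def cutPasteComap (hπ : IsLocallyConstant π) : (T → R) →ₗ[R] cutPasteAlgebra Y R :=
  (LinearMap.funLeft R R π).codRestrict (Subalgebra.toSubmodule (cutPasteAlgebra Y R))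
    fun g => isCutPaste_iff_isLocallyConstant.2 (hπ.comp g)

lemma cutPasteComap_injective (hπ : IsLocallyConstant π) (hπs : Surjective π) :
    Injective (cutPasteComap R hπ) := fun _ _ hg =>
  LinearMap.funLeft_injective_of_surjective R R π hπs (congrArg Subtype.val hg)

lemma free_range_cutPasteComap [Finite T] (hπ : IsLocallyConstant π) (hπs : Surjective π) :
    Module.Free R (LinearMap.range (cutPasteComap R hπ)) :=
  .of_equiv (LinearEquiv.ofInjective _ (cutPasteComap_injective R hπ hπs))

end Comap

lemma exists_free_submodule_cutPasteAlgebra_superset {Y : Type} [TopologicalSpace Y]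
    [CompactSpace Y] (R : Type) [CommRing R] (s : Set (cutPasteAlgebra Y R)) (hs : s.Finite) :
    ∃ N : Submodule R (cutPasteAlgebra Y R), s ⊆ N ∧ Module.Free R N := by
  have := hs.to_subtype
  let Φ : LocallyConstant Y (s → R) :=
    .unflip fun f => ⟨f.1.1, isCutPaste_iff_isLocallyConstant.1 f.1.2⟩
  have := Φ.range_finite.to_subtype
  have hπ : IsLocallyConstant (rangeFactorization Φ) :=
    .desc _ Subtype.val Φ.isLocallyConstant Subtype.val_injective
  exact ⟨LinearMap.range (cutPasteComap R hπ), fun f hf => ⟨fun v => v.1 ⟨f, hf⟩, rfl⟩,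
    free_range_cutPasteComap R hπ rangeFactorization_surjective⟩

/-- For any commutative ring `R` and any compact topological space `Y`,
the `R`-module `F(Y;R)` of cut-and-paste continuous functions `Y → R` is flat. -/
theorem cutPasteAlgebra_flat (Y R : Type) [TopologicalSpace Y] [CompactSpace Y]
    [CommRing R] : Module.Flat R (cutPasteAlgebra Y R) :=
  .of_forall_finite_subset_flat_submodule fun s hs =>
    let ⟨N, hsN, _⟩ := exists_free_submodule_cutPasteAlgebra_superset R s hs
    ⟨N, hsN, inferInstance⟩
end

section
/- Let R be a ring and M an R-module. If for every nonzero m ∈ M there exists an R-linear map f : M → R with f(m) ≠ 0 (M is torsionless), and R is semihereditary, then M is flat. -/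
/-!
Evaluation embeds a torsionless module `M` into the product `R^S`, `S = Hom(M, R)`.
For a finitely generated projective `N` the canonical map `N ⊗ R^S → N^S` is injective
(`N` is a retract of a finite free module, where the map is an isomorphism), so by naturality
`I ⊗ R^S → R ⊗ R^S` is injective for every finitely generated ideal `I`, i.e. `R^S` is flat.
A submodule of a flat module is flat as soon as finitely generated ideals are flat: in the
square formed by `I ⊗ M → I ⊗ R^S → R ⊗ R^S` and `I ⊗ M → R ⊗ M → R ⊗ R^S` the first path
is injective.
-/

open TensorProduct Function

namespace TensorProduct

variable {R : Type*} [CommRing R] (S : Type*)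

lemma piScalarRightHom_comp_rTensor {N N' : Type*} [AddCommGroup N] [Module R N]
    [AddCommGroup N'] [Module R N'] (u : N →ₗ[R] N') :
    piScalarRightHom R R N' S ∘ₗ u.rTensor (S → R) =
      u.compLeft S ∘ₗ piScalarRightHom R R N S := by
  ext x v s
  simp

lemma piScalarRightHom_pi_injective (ι : Type*) [Fintype ι] [DecidableEq ι] :
    Injective (piScalarRightHom R R (ι → R) S) := by
  have key : ∀ z, piScalarRightHom R R (ι → R) S z =
      fun s i => piScalarRight R R (S → R) ι (TensorProduct.comm R _ _ z) i s := by
    intro z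
    induction z using TensorProduct.induction_on with
    | zero => rfl
    | tmul x v => ext s i; simp [mul_comm]
    | add a b ha hb => simp only [map_add, ha, hb]; rfl
  intro a b hab
  apply (TensorProduct.comm R _ _).injective
  apply (piScalarRight R R (S → R) ι).injective
  ext i s
  simpa only [key] using congr_fun (congr_fun hab s) i

lemma piScalarRightHom_injective_of_projective (N : Type*) [AddCommGroup N] [Module R N]
    [Module.Finite R N] [Module.Projective R N] :
    Injective (piScalarRightHom R R N S) := by
  obtain ⟨n, p, u, -, -, hpu⟩ := Module.Finite.exists_comp_eq_id_of_projective R N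
  have hu' : Injective (u.rTensor (S → R)) := by
    refine LinearMap.injective_of_comp_eq_id _ (p.rTensor (S → R)) ?_
    rw [← LinearMap.rTensor_comp, hpu, LinearMap.rTensor_id]
  have h : Injective (u.compLeft S ∘ piScalarRightHom R R N S) := by
    rw [← LinearMap.coe_comp, ← piScalarRightHom_comp_rTensor, LinearMap.coe_comp]
    exact (piScalarRightHom_pi_injective S (Fin n)).comp hu'
  exact h.of_comp

lemma rTensor_pi_injective_of_projective {N N' : Type*} [AddCommGroup N] [Module R N]
    [Module.Finite R N] [Module.Projective R N] [AddCommGroup N'] [Module R N']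
    (u : N →ₗ[R] N') (hu : Injective u) :
    Injective (u.rTensor (S → R)) := by
  refine Injective.of_comp (f := piScalarRightHom R R N' S) ?_
  rw [← LinearMap.coe_comp, piScalarRightHom_comp_rTensor, LinearMap.coe_comp]
  exact hu.comp_left.comp (piScalarRightHom_injective_of_projective S N)

end TensorProduct

namespace Module.Flat

variable {R : Type*} [CommRing R]

lemma pi_of_forall_fg_ideal_projective (S : Type*)
    (hR : ∀ I : Ideal R, I.FG → Projective R I) : Flat R (S → R) := by
  refine iff_rTensor_injective.mpr fun I hI => ?_
  have : Projective R I := hR I hI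
  have : Module.Finite R I := Module.Finite.iff_fg.mpr hI
  exact TensorProduct.rTensor_pi_injective_of_projective S I.subtype I.injective_subtype

lemma of_injective_of_forall_fg_ideal_flat {M F : Type*} [AddCommGroup M] [Module R M]
    [AddCommGroup F] [Module R F] [Flat R F] (hR : ∀ I : Ideal R, I.FG → Flat R I)
    (e : M →ₗ[R] F) (he : Function.Injective e) : Flat R M := by
  refine iff_rTensor_injective.mpr fun I hI => ?_
  have : Flat R I := hR I hI
  have h : Function.Injective (e.lTensor R ∘ I.subtype.rTensor M) := by
    rw [← LinearMap.coe_comp, LinearMap.lTensor_comp_rTensor, ← LinearMap.rTensor_comp_lTensor,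
      LinearMap.coe_comp]
    exact (rTensor_preserves_injective_linearMap _ I.injective_subtype).comp
      (lTensor_preserves_injective_linearMap e he)
  exact h.of_comp

end Module.Flat

/-- over a semihereditary ring (every finitely generated ideal is projective),
every torsionless module (every nonzero element is separated from `0` by a linear
functional `M → R`) is flat. -/
theorem flat_of_torsionless_of_semihereditary (R M : Type) [CommRing R] [AddCommGroup M]
    [Module R M]
    (hsh : ∀ I : Ideal R, I.FG → Module.Projective R I)
    (htl : ∀ m : M, m ≠ 0 → ∃ f : M →ₗ[R] R, f m ≠ 0) :
    Module.Flat R M := by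
  have : Module.Flat R ((M →ₗ[R] R) → R) := .pi_of_forall_fg_ideal_projective _ hsh
  have hev : Injective (LinearMap.pi fun f : M →ₗ[R] R => f) := by
    refine (injective_iff_map_eq_zero _).mpr fun m hm => by_contra fun hm0 => ?_
    obtain ⟨f, hf⟩ := htl m hm0
    exact hf (congr_fun hm f)
  refine .of_injective_of_forall_fg_ideal_flat (fun I hI => ?_) _ hev
  have := hsh I hI
  infer_instance
end

section
/- Let Y be a compact topological space with a Γ-action and A ⊆ Y a clopen subset with Γ·A = Y. Then the characteristic function χ_A is a full idempotent in the crossed product ring F(Y;R)⋊Γ, i.e. the two-sided ideal generated by χ_A is the whole ring. -/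
open Set

set_option synthInstance.maxHeartbeats 1000000

section Crossed

variable (Y R : Type) [TopologicalSpace Y] [CommRing R]
variable (Γ : Type) [Group Γ] [MulAction Γ Y] [ContinuousConstSMul Γ Y]

/-- The action of `Γ` on cut-and-paste functions: `(γ • f)(y) = f(γ⁻¹ y)`. -/
def gsmul (γ : Γ) (f : cutPasteAlgebra Y R) : cutPasteAlgebra Y R :=
  ⟨fun y => (f : Y → R) (γ⁻¹ • y),
    fun r => ((f.2 : IsCutPaste Y R f) r).preimage (continuous_const_smul γ⁻¹)⟩

/-- The multiplication of the crossed product `F(Y;R) ⋊ Γ`, realized on the free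
`F(Y;R)`-module `Γ →₀ F(Y;R)` with basis `Γ`:  `(f·γ)(g·γ') = (f·g^γ)·(γγ')`. -/
noncomputable def cmul (a b : Γ →₀ cutPasteAlgebra Y R) : Γ →₀ cutPasteAlgebra Y R :=
  a.sum fun γ f => b.sum fun γ' g => Finsupp.single (γ * γ') (f * gsmul Y R Γ γ g)

/-- The unit `1·1` of the crossed product. -/
noncomputable def cone : Γ →₀ cutPasteAlgebra Y R := Finsupp.single 1 1

/-- The characteristic function of a clopen subset, as a cut-and-paste function. -/
noncomputable def chi (A : Set Y) (hA : IsClopen A) : cutPasteAlgebra Y R :=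
  ⟨A.indicator (fun _ => (1 : R)), by
    intro r
    classical
    have e : A.indicator (fun _ => (1 : R)) ⁻¹' {r}
        = (if (1 : R) = r then A else ∅) ∪ (if (0 : R) = r then Aᶜ else ∅) := by
      ext y
      by_cases hy : y ∈ A <;> by_cases h1 : (1 : R) = r <;> by_cases h0 : (0 : R) = r <;>
        simp [Set.indicator, hy, h1, h0]
    rw [e]
    refine IsClopen.union ?_ ?_ <;> split_ifs <;>
      simp [hA, hA.compl, isClopen_empty]⟩

end Crossed

/-!
By compactness finitely many translates `γᵢ • A` cover `Y`; disjointing them gives a clopen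
partition `Y = ⨆ Bᵢ` with `Bᵢ ⊆ γᵢ • A`. In the crossed product `γ χ_A γ⁻¹ = χ_{γ • A}`, and
`χ_{γ • A} χ_B = χ_B` for `B ⊆ γ • A`, so `1 = ∑ᵢ χ_{Bᵢ} = ∑ᵢ γᵢ χ_A γᵢ⁻¹ χ_{Bᵢ}`.
-/

lemma IsClopen.disjointed {X ι : Type*} [TopologicalSpace X] [Preorder ι]
    [LocallyFiniteOrderBot ι] {C : ι → Set X} (hC : ∀ i, IsClopen (C i)) (i : ι) :
    IsClopen (disjointed C i) :=
  disjointedRec (fun _ j ht => ht.diff (hC j)) (hC i)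

open Pointwise in
lemma IsClopen.smul {X G : Type*} [TopologicalSpace X] [Group G] [MulAction G X]
    [ContinuousConstSMul G X] {s : Set X} (hs : IsClopen s) (c : G) : IsClopen (c • s) :=
  ⟨hs.isClosed.smul c, hs.isOpen.smul c⟩

open Pointwise in
lemma exists_fin_iUnion_smul_eq_univ {Y Γ : Type*} [TopologicalSpace Y] [CompactSpace Y]
    [Group Γ] [MulAction Γ Y] [ContinuousConstSMul Γ Y] {A : Set Y} (hA : IsOpen A)
    (horb : ⋃ γ : Γ, γ • A = univ) :
    ∃ (k : ℕ) (g : Fin k → Γ), ⋃ i, g i • A = univ := by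
  obtain ⟨t, ht⟩ := isCompact_univ.elim_finite_subcover (fun γ : Γ => γ • A)
    (fun γ => hA.smul γ) horb.ge
  refine ⟨t.card, fun i => t.equivFin.symm i, eq_univ_of_forall fun y => ?_⟩
  obtain ⟨γ, hγt, hy⟩ := mem_iUnion₂.mp (ht (mem_univ y))
  exact mem_iUnion.mpr ⟨t.equivFin ⟨γ, hγt⟩, by simpa using hy⟩

section CrossedProduct

variable {Y R Γ : Type} [TopologicalSpace Y] [CommRing R]

lemma chi_mul_chi_of_subset {A B : Set Y} (hA : IsClopen A) (hB : IsClopen B) (hBA : B ⊆ A) :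
    chi Y R A hA * chi Y R B hB = chi Y R B hB := by
  apply Subtype.ext
  change A.indicator 1 * B.indicator 1 = B.indicator 1
  rw [← inter_indicator_one, inter_eq_right.mpr hBA]

open Function in
lemma sum_chi_eq_one {ι : Type*} [Fintype ι] {B : ι → Set Y} (hB : ∀ i, IsClopen (B i))
    (hdisj : Pairwise (Disjoint on B)) (hcover : ⋃ i, B i = univ) :
    ∑ i, chi Y R (B i) (hB i) = 1 := by
  apply Subtype.ext
  funext y
  rw [AddSubmonoidClass.coe_finsetSum, Finset.sum_apply]
  change ∑ i, (B i).indicator 1 y = 1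
  rw [← Finset.indicator_biUnion_apply _ _ (hdisj.set_pairwise _)]
  simp [hcover]

variable [Group Γ] [MulAction Γ Y] [ContinuousConstSMul Γ Y]

lemma gsmul_zero (γ : Γ) : gsmul Y R Γ γ 0 = 0 := rfl

lemma one_gsmul (f : cutPasteAlgebra Y R) : gsmul Y R Γ 1 f = f :=
  Subtype.ext <| funext fun y => by simp [gsmul]

lemma gsmul_gsmul_inv (γ : Γ) (f : cutPasteAlgebra Y R) :
    gsmul Y R Γ γ (gsmul Y R Γ γ⁻¹ f) = f :=
  Subtype.ext <| funext fun y => by simp [gsmul, smul_smul]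

open Pointwise in
lemma gsmul_chi (γ : Γ) {A : Set Y} (hA : IsClopen A) :
    gsmul Y R Γ γ (chi Y R A hA) = chi Y R (γ • A) (hA.smul γ) := by
  apply Subtype.ext
  funext y
  change A.indicator 1 (γ⁻¹ • y) = (γ • A).indicator 1 y
  by_cases hy : γ⁻¹ • y ∈ A <;> simp [hy, mem_smul_set_iff_inv_smul_mem]

lemma cmul_single_single (γ γ' : Γ) (f g : cutPasteAlgebra Y R) :
    cmul Y R Γ (Finsupp.single γ f) (Finsupp.single γ' g)
      = Finsupp.single (γ * γ') (f * gsmul Y R Γ γ g) := by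
  simp [cmul, gsmul_zero]

open Pointwise in
lemma cmul_single_chi_single_eq_chi (γ : Γ) {A B : Set Y} (hA : IsClopen A) (hB : IsClopen B)
    (hBA : B ⊆ γ • A) :
    cmul Y R Γ (cmul Y R Γ (Finsupp.single γ 1) (Finsupp.single 1 (chi Y R A hA)))
        (Finsupp.single γ⁻¹ (gsmul Y R Γ γ⁻¹ (chi Y R B hB)))
      = Finsupp.single 1 (chi Y R B hB) := by
  rw [cmul_single_single, cmul_single_single, mul_one, one_mul, mul_inv_cancel,
    gsmul_gsmul_inv, gsmul_chi, chi_mul_chi_of_subset _ _ hBA]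

end CrossedProduct

open Pointwise Finsupp in
/-- if `Y` is a compact `Γ`-space and `A ⊆ Y` a clopen subset with
`Γ·A = Y`, then the characteristic function `χ_A` is a full idempotent in the crossed
product `F(Y;R) ⋊ Γ`: it is idempotent, and there are finitely many elements `xᵢ, yᵢ` of
the crossed product with `∑ i, xᵢ · χ_A · yᵢ = 1`. -/
theorem chi_full_idempotent (Y R Γ : Type) [TopologicalSpace Y] [CompactSpace Y]
    [CommRing R] [Group Γ] [MulAction Γ Y] [ContinuousConstSMul Γ Y]
    (A : Set Y) (hA : IsClopen A) (horb : (⋃ γ : Γ, γ • A) = Set.univ) :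
    cmul Y R Γ (Finsupp.single 1 (chi Y R A hA)) (Finsupp.single 1 (chi Y R A hA))
        = Finsupp.single 1 (chi Y R A hA) ∧
    ∃ (k : ℕ) (x y : Fin k → (Γ →₀ cutPasteAlgebra Y R)),
      ∑ i, cmul Y R Γ (cmul Y R Γ (x i) (Finsupp.single 1 (chi Y R A hA))) (y i)
        = cone Y R Γ := by
  refine ⟨by rw [cmul_single_single, mul_one, one_gsmul,
    chi_mul_chi_of_subset _ _ subset_rfl], ?_⟩
  obtain ⟨k, g, hg⟩ := exists_fin_iUnion_smul_eq_univ hA.isOpen horb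
  set B := disjointed fun i => g i • A
  have hB : ∀ i, IsClopen (B i) := IsClopen.disjointed fun i => hA.smul (g i)
  refine ⟨k, fun i => single (g i) 1,
    fun i => single (g i)⁻¹ (gsmul Y R Γ (g i)⁻¹ (chi Y R (B i) (hB i))), ?_⟩
  calc _ = ∑ i, single 1 (chi Y R (B i) (hB i)) :=
        Finset.sum_congr rfl fun i _ =>
          cmul_single_chi_single_eq_chi (g i) hA (hB i) (disjointed_subset _ i)
    _ = single 1 (∑ i, chi Y R (B i) (hB i)) := (single_finsetSum _ _ _).symm
    _ = cone Y R Γ := by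
      rw [sum_chi_eq_one hB (disjoint_disjointed _) (iUnion_disjointed.trans hg)]; rfl
end

section
/- The 2n+1-dimensional Heisenberg Lie algebras over different fields: the rational Lie algebras g = H(n, ℚ(√2)) (viewed as a Lie algebra over ℚ of dimension 2(2n+1)) and h = H(n,ℚ) ⊕ H(n,ℚ) are not isomorphic as ℚ-Lie algebras, because every element of g has centralizer of ℚ-codimension 0 or ≥ 2, while h contains an element whose centralizer has ℚ-codimension exactly 1. -/
/-- The `2n+1`-dimensional Heisenberg Lie algebra over a commutative ring `K`,
with underlying space `K^n × K^n × K` (the `x`-vector, the `y`-vector, and the `z`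
coordinate of the corresponding strictly upper triangular matrix). -/
def Heis (n : ℕ) (K : Type) [CommRing K] : Type := (Fin n → K) × (Fin n → K) × K

variable {n : ℕ} {K : Type} [CommRing K]

instance : AddCommGroup (Heis n K) :=
  inferInstanceAs (AddCommGroup ((Fin n → K) × (Fin n → K) × K))

instance (R : Type) [CommRing R] [Module R K] : Module R (Heis n K) :=
  inferInstanceAs (Module R ((Fin n → K) × (Fin n → K) × K))

instance : LieRing (Heis n K) where
  bracket x y := (0, 0, (∑ i, x.1 i * y.2.1 i) - ∑ i, y.1 i * x.2.1 i)
  add_lie x y z := by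
    show ((0, 0, (∑ i, (x.1 i + y.1 i) * z.2.1 i) - ∑ i, z.1 i * (x.2.1 i + y.2.1 i)) :
        (Fin n → K) × (Fin n → K) × K)
        = (0, 0, (∑ i, x.1 i * z.2.1 i) - ∑ i, z.1 i * x.2.1 i)
          + (0, 0, (∑ i, y.1 i * z.2.1 i) - ∑ i, z.1 i * y.2.1 i)
    refine Prod.ext (by simp; exact (add_zero _).symm)
      (Prod.ext (by simp; exact (add_zero _).symm) ?_)
    show _ = (_ : K) + _
    simp only [add_mul, mul_add, Finset.sum_add_distrib, Prod.snd_add, Prod.fst_add]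
    ring
  lie_add x y z := by
    show ((0, 0, (∑ i, x.1 i * (y.2.1 i + z.2.1 i)) - ∑ i, (y.1 i + z.1 i) * x.2.1 i) :
        (Fin n → K) × (Fin n → K) × K)
        = (0, 0, (∑ i, x.1 i * y.2.1 i) - ∑ i, y.1 i * x.2.1 i)
          + (0, 0, (∑ i, x.1 i * z.2.1 i) - ∑ i, z.1 i * x.2.1 i)
    refine Prod.ext (by simp; exact (add_zero _).symm)
      (Prod.ext (by simp; exact (add_zero _).symm) ?_)
    show _ = (_ : K) + _
    simp only [add_mul, mul_add, Finset.sum_add_distrib, Prod.snd_add, Prod.fst_add]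
    ring
  lie_self x := by
    show ((0, 0, (∑ i, x.1 i * x.2.1 i) - ∑ i, x.1 i * x.2.1 i) :
        (Fin n → K) × (Fin n → K) × K) = 0
    simp
  leibniz_lie x y z := by
    refine Prod.ext ?_ (Prod.ext ?_ ?_) <;>
      · show _ = _
        simp [Prod.fst_add, Prod.snd_add, mul_comm]
        try ring
        try exact (add_zero _).symm

instance (R : Type) [CommRing R] [Module R K] [SMulCommClass R K K] [IsScalarTower R K K] :
    LieAlgebra R (Heis n K) where
  lie_smul r x y := by
    show ((0, 0, (∑ i, x.1 i * (r • y.2.1 i)) - ∑ i, (r • y.1 i) * x.2.1 i) :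
        (Fin n → K) × (Fin n → K) × K)
        = r • (0, 0, (∑ i, x.1 i * y.2.1 i) - ∑ i, y.1 i * x.2.1 i)
    refine Prod.ext (by simp; exact (smul_zero _).symm)
      (Prod.ext (by simp; exact (smul_zero _).symm) ?_)
    show _ = (_ : R) • (_ : K)
    simp [mul_smul_comm, smul_mul_assoc, Finset.smul_sum, smul_sub, Prod.smul_snd, Prod.smul_fst]

open DirectSum

set_option maxHeartbeats 2000000
set_option synthInstance.maxHeartbeats 2000000

/-- The field `ℚ(√2)`. -/
noncomputable def QSqrt2 : IntermediateField ℚ ℝ :=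
  IntermediateField.adjoin ℚ ({Real.sqrt 2} : Set ℝ)

/-!
The bracket of `H(n, K)` takes values in the centre `{(0, 0, z)} ≅ K`, and for a non-central
`x` the form `y ↦ ⁅x, y⁆` is `K`-linear and nonzero, hence onto the centre. So over a subfield
`R ⊆ K` the centralizer `ker (ad x)` has codimension `0` or `[K : R]`: for `K = ℚ(√2)` this is
`0` or `2`, while for `K = ℚ` and `x = (e₁, 0, 0)` it is `1`, and putting `x` into one summand of
`H(n, ℚ) ⊕ H(n, ℚ)` keeps the codimension `1`. Codimensions of centralizers are invariant under
Lie algebra isomorphisms.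
-/

open Module LinearMap Polynomial

theorem LinearMap.finrank_sub_finrank_ker_eq_finrank_range {F V V₂ : Type*} [DivisionRing F]
    [AddCommGroup V] [Module F V] [FiniteDimensional F V] [AddCommGroup V₂] [Module F V₂]
    (f : V →ₗ[F] V₂) : finrank F V - finrank F (ker f) = finrank F (range f) := by
  have := f.finrank_range_add_finrank_ker
  omega

theorem LieEquiv.finrank_ker_ad_apply {R L L' : Type*} [CommRing R] [LieRing L] [LieAlgebra R L]
    [LieRing L'] [LieAlgebra R L'] (e : L ≃ₗ⁅R⁆ L') (x : L) :
    finrank R (ker (LieAlgebra.ad R L' (e x))) = finrank R (ker (LieAlgebra.ad R L x)) := by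
  have : ker (LieAlgebra.ad R L' (e x))
      = (ker (LieAlgebra.ad R L x)).map (e.toLinearEquiv : L →ₗ[R] L') := by
    ext y
    obtain ⟨z, rfl⟩ := e.surjective y
    have hz : e.toLinearEquiv.symm (e z) = z := e.toLinearEquiv.symm_apply_apply z
    simp [Submodule.mem_map_equiv, hz, ← e.map_lie]
  rw [this, LinearEquiv.finrank_map_eq]

namespace DirectSum

variable {ι : Type*} [DecidableEq ι] {L : ι → Type*} [∀ i, LieRing (L i)]

theorem lie_of_left (i : ι) (x : L i) (w : ⨁ i, L i) : ⁅of L i x, w⁆ = of L i ⁅x, w i⁆ := by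
  ext j
  rw [bracket_apply]
  by_cases h : i = j
  · subst h
    simp
  · rw [of_eq_of_ne _ _ _ (Ne.symm h), of_eq_of_ne _ _ _ (Ne.symm h), zero_lie]

theorem finrank_range_ad_of {R : Type*} [CommRing R] [∀ i, LieAlgebra R (L i)] (i : ι) (x : L i) :
    finrank R (range (LieAlgebra.ad R (⨁ i, L i) (of L i x)))
      = finrank R (range (LieAlgebra.ad R (L i) x)) := by
  have : range (LieAlgebra.ad R (⨁ i, L i) (of L i x))
      = (range (LieAlgebra.ad R (L i) x)).map (lof R ι L i) := by
    apply le_antisymm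
    · rintro _ ⟨w, rfl⟩
      exact ⟨⁅x, w i⁆, ⟨w i, rfl⟩, (lie_of_left i x w).symm⟩
    · rintro _ ⟨_, ⟨y, rfl⟩, rfl⟩
      exact ⟨of L i y, lie_of_same L x y⟩
  rw [this, ← (Submodule.equivMapOfInjective _ (of_injective i) _).finrank_eq]

end DirectSum

namespace Heis

theorem lie_def (x y : Heis n K) :
    ⁅x, y⁆ = ((0 : Fin n → K), (0 : Fin n → K), (∑ i, x.1 i * y.2.1 i) - ∑ i, y.1 i * x.2.1 i) :=
  rfl

variable (R : Type) [CommRing R]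

instance [Module R K] [Module.Finite R K] : Module.Finite R (Heis n K) :=
  inferInstanceAs (Module.Finite R ((Fin n → K) × (Fin n → K) × K))

def ofCenter [Module R K] : K →ₗ[R] Heis n K :=
  LinearMap.inr R (Fin n → K) ((Fin n → K) × K) ∘ₗ LinearMap.inr R (Fin n → K) K

theorem ofCenter_injective [Module R K] : Function.Injective (ofCenter (n := n) (K := K) R) :=
  fun _ _ h => congrArg (fun p : Heis n K => p.2.2) h

theorem ad_eq_zero [Algebra R K] {x : Heis n K} (hx : x.1 = 0 ∧ x.2.1 = 0) :
    LieAlgebra.ad R (Heis n K) x = 0 := by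
  ext y
  simp [lie_def, hx.1, hx.2]
  rfl

variable {F : Type} [Field F]

theorem exists_lie_eq {x : Heis n F} (hx : ¬(x.1 = 0 ∧ x.2.1 = 0)) (s : F) :
    ∃ y : Heis n F, ⁅x, y⁆ = (0, 0, s) := by
  suffices ∃ y : Heis n F, (∑ i, x.1 i * y.2.1 i) - ∑ i, y.1 i * x.2.1 i = s from
    this.imp fun y hy => by rw [lie_def, hy]
  by_cases h1 : x.1 = 0
  · obtain ⟨i, hi : x.2.1 i ≠ 0⟩ := Function.ne_iff.mp fun h2 => hx ⟨h1, h2⟩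
    exact ⟨(Pi.single i (-(s / x.2.1 i)), 0, 0), by simp [h1, Pi.single_apply, hi]⟩
  · obtain ⟨i, hi : x.1 i ≠ 0⟩ := Function.ne_iff.mp h1
    exact ⟨(0, Pi.single i (s / x.1 i), 0), by simp [Pi.single_apply, mul_div_cancel₀ _ hi]⟩

variable [Algebra R F]

theorem range_ad {x : Heis n F} (hx : ¬(x.1 = 0 ∧ x.2.1 = 0)) :
    range (LieAlgebra.ad R (Heis n F) x) = range (ofCenter R) := by
  apply le_antisymm
  · rintro _ ⟨y, rfl⟩
    exact ⟨_, rfl⟩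
  · rintro _ ⟨s, rfl⟩
    exact exists_lie_eq hx s

theorem finrank_range_ad {x : Heis n F} (hx : ¬(x.1 = 0 ∧ x.2.1 = 0)) :
    finrank R (range (LieAlgebra.ad R (Heis n F) x)) = finrank R F := by
  rw [range_ad R hx, LinearMap.finrank_range_of_inj (ofCenter_injective R)]

end Heis

theorem isIntegral_sqrt_two : IsIntegral ℚ √2 :=
  ⟨X ^ 2 - C 2, monic_X_pow_sub_C _ two_ne_zero, by simp⟩

instance : FiniteDimensional ℚ QSqrt2 :=
  IntermediateField.adjoin.finiteDimensional isIntegral_sqrt_two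

theorem minpoly_sqrt_two : minpoly ℚ √2 = X ^ 2 - C 2 := by
  have sq_ne_two (b : ℚ) : b ^ 2 ≠ 2 := fun hb =>
    (irrational_sqrt_ratCast_iff_of_nonneg zero_le_two).mp (by simpa using irrational_sqrt_two)
      ⟨b, by rw [← hb, sq]⟩
  exact (minpoly.eq_of_irreducible_of_monic
    (X_pow_sub_C_irreducible_of_prime Nat.prime_two sq_ne_two) (by simp)
    (monic_X_pow_sub_C _ two_ne_zero)).symm

theorem finrank_QSqrt2 : finrank ℚ QSqrt2 = 2 := by
  rw [QSqrt2, IntermediateField.adjoin.finrank isIntegral_sqrt_two, minpoly_sqrt_two,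
    natDegree_X_pow_sub_C]

/-- the rational Lie algebras `g = H(n, ℚ(√2))` (a `ℚ`-Lie algebra of
dimension `2(2n+1)` by restriction of scalars) and `h = H(n,ℚ) ⊕ H(n,ℚ)` are not
isomorphic over `ℚ`: in `g` every element has centralizer of `ℚ`-codimension `0` or
`≥ 2`, while `h` has an element whose centralizer has `ℚ`-codimension exactly `1`. -/
theorem heisenberg_sqrt2_not_isomorphic_to_double (n : ℕ) (hn : 0 < n) :
    (∀ x : Heis n QSqrt2,
        Module.finrank ℚ (Heis n QSqrt2)
            - Module.finrank ℚ (LinearMap.ker (LieAlgebra.ad ℚ _ x)) = 0 ∨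
        2 ≤ Module.finrank ℚ (Heis n QSqrt2)
            - Module.finrank ℚ (LinearMap.ker (LieAlgebra.ad ℚ _ x))) ∧
    (∃ y : ⨁ _i : Fin 2, Heis n ℚ,
        Module.finrank ℚ (⨁ _i : Fin 2, Heis n ℚ)
            - Module.finrank ℚ (LinearMap.ker (LieAlgebra.ad ℚ _ y)) = 1) ∧
    IsEmpty (Heis n QSqrt2
        ≃ₗ⁅ℚ⁆ (⨁ _i : Fin 2, Heis n ℚ)) := by
  have codim_g (x : Heis n QSqrt2) : finrank ℚ (Heis n QSqrt2)
      - finrank ℚ (ker (LieAlgebra.ad ℚ _ x)) = 0 ∨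
      2 ≤ finrank ℚ (Heis n QSqrt2) - finrank ℚ (ker (LieAlgebra.ad ℚ _ x)) := by
    rw [finrank_sub_finrank_ker_eq_finrank_range]
    by_cases hx : x.1 = 0 ∧ x.2.1 = 0
    · left
      rw [Heis.ad_eq_zero ℚ hx, range_zero, finrank_bot]
    · right
      rw [Heis.finrank_range_ad ℚ hx, finrank_QSqrt2]
  obtain ⟨y, codim_h⟩ : ∃ y : ⨁ _i : Fin 2, Heis n ℚ, finrank ℚ (⨁ _i : Fin 2, Heis n ℚ)
      - finrank ℚ (ker (LieAlgebra.ad ℚ _ y)) = 1 := by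
    let x : Heis n ℚ := (Pi.single ⟨0, hn⟩ 1, 0, 0)
    have hx : ¬(x.1 = 0 ∧ x.2.1 = 0) := fun h => by simpa [x] using congrFun h.1 ⟨0, hn⟩
    refine ⟨of _ 0 x, ?_⟩
    rw [finrank_sub_finrank_ker_eq_finrank_range, finrank_range_ad_of,
      Heis.finrank_range_ad ℚ hx, finrank_self]
  refine ⟨codim_g, ⟨y, codim_h⟩, ⟨fun e => ?_⟩⟩
  have := codim_g (e.symm y)
  rw [e.toLinearEquiv.finrank_eq, e.symm.finrank_ker_ad_apply] at this
  omega
end
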